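/- arXiv:1301.3264 — 7 statements merged into one kernel-verified Lean document; each statement's English description precedes it below -/
import Mathlib

section
/- For p, q > 1, the function t ↦ (1 - t^q)^(-1/p) is geometrically convex on (0,1); that is, for all x, y in (0,1) and λ in [0,1], (1 - (x^λ y^(1-λ))^q)^(-1/p) ≤ ((1-x^q)^(-1/p))^λ · ((1-y^q)^(-1/p))^(1-λ). -/
open Real Set

theorem rpow_one_sub_geom_convex (p q : ℝ) (hp : 1 < p) (hq : 1 < q) :
    ∀ x ∈ Set.Ioo (0:ℝ) 1, ∀ y ∈ Set.Ioo (0:ℝ) 1, ∀ l ∈ Set.Icc (0:ℝ) 1,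
      (1 - (x ^ l * y ^ (1 - l)) ^ q) ^ (-1/p)
        ≤ ((1 - x ^ q) ^ (-1/p)) ^ l * ((1 - y ^ q) ^ (-1/p)) ^ (1 - l) := by
  rintro x ⟨hx0, hx1⟩ y ⟨hy0, hy1⟩ l ⟨hl0, hl1⟩
  have hl1' : (0:ℝ) ≤ 1 - l := by linarith
  set a := x ^ q with ha
  set b := y ^ q with hb
  have ha0 : 0 < a := Real.rpow_pos_of_pos hx0 q
  have hb0 : 0 < b := Real.rpow_pos_of_pos hy0 q
  have ha1 : a < 1 := Real.rpow_lt_one hx0.le hx1 (by linarith)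
  have hb1 : b < 1 := Real.rpow_lt_one hy0.le hy1 (by linarith)
  have h1a : (0:ℝ) < 1 - a := by linarith
  have h1b : (0:ℝ) < 1 - b := by linarith
  have key : (1 - a) ^ l * (1 - b) ^ (1 - l) ≤ 1 - a ^ l * b ^ (1 - l) := by
    have h1 := Real.geom_mean_le_arith_mean2_weighted hl0 hl1' ha0.le hb0.le (by ring)
    have h2 := Real.geom_mean_le_arith_mean2_weighted hl0 hl1' h1a.le h1b.le (by ring)
    nlinarith [h1, h2]
  have hbase : (x ^ l * y ^ (1 - l)) ^ q = a ^ l * b ^ (1 - l) := by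
    rw [Real.mul_rpow (Real.rpow_nonneg hx0.le _) (Real.rpow_nonneg hy0.le _),
      ← Real.rpow_mul hx0.le, ← Real.rpow_mul hy0.le, mul_comm l q, mul_comm (1 - l) q,
      Real.rpow_mul hx0.le, Real.rpow_mul hy0.le]
  have hprodpos : 0 < (1 - a) ^ l * (1 - b) ^ (1 - l) := by positivity
  have hrhs : ((1 - a) ^ (-1/p)) ^ l * ((1 - b) ^ (-1/p)) ^ (1 - l)
      = ((1 - a) ^ l * (1 - b) ^ (1 - l)) ^ (-1/p) := by
    rw [← Real.rpow_mul h1a.le, ← Real.rpow_mul h1b.le, mul_comm (-1/p) l,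
      mul_comm (-1/p) (1 - l), Real.rpow_mul h1a.le, Real.rpow_mul h1b.le,
      ← Real.mul_rpow (Real.rpow_nonneg h1a.le _) (Real.rpow_nonneg h1b.le _)]
  rw [hbase, hrhs]
  exact Real.rpow_le_rpow_of_nonpos hprodpos key
    (by rw [neg_div]; exact neg_nonpos.mpr (by positivity))
end

section
/- Let f : I → (0,∞) be a twice differentiable positive function on an interval I ⊆ (0,∞). If x·(f(x)·f''(x) - f'(x)^2) + f(x)·f'(x) ≥ 0 for all x ∈ I, then f is geometrically convex on I, i.e., f(x^λ y^(1-λ)) ≤ f(x)^λ f(y)^(1-λ) for all x, y ∈ I and λ ∈ [0,1]. -/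
open Real Set

/-!
Substituting `x = exp t`, geometric convexity of `f` is ordinary convexity of
`G t = log (f (exp t))`. Its derivative is `G' t = x f'(x) / f(x)`, and the hypothesis says
exactly that `x ↦ x f'(x) / f(x)` has nonnegative derivative
`(x (f f'' - f'²) + f f') / f²`, so `G'` is monotone and `G` is convex.
-/

def GeomConvexOn (s : Set ℝ) (f : ℝ → ℝ) : Prop :=
  ∀ x ∈ s, ∀ y ∈ s, ∀ l ∈ Icc (0 : ℝ) 1,
    f (x ^ l * y ^ (1 - l)) ≤ f x ^ l * f y ^ (1 - l)

lemma exp_mul_log_add_mul_log {x y : ℝ} (hx : 0 < x) (hy : 0 < y) (l m : ℝ) :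
    exp (l * log x + m * log y) = x ^ l * y ^ m := by
  rw [exp_add, rpow_def_of_pos hx, rpow_def_of_pos hy, mul_comm l, mul_comm m]

lemma hasDerivAt_mul_deriv_div {f : ℝ → ℝ} {x : ℝ} (hf : DifferentiableAt ℝ f x)
    (hf' : DifferentiableAt ℝ (deriv f) x) (hx : f x ≠ 0) :
    HasDerivAt (fun y => y * deriv f y / f y)
      ((x * (f x * deriv (deriv f) x - deriv f x ^ 2) + f x * deriv f x) / f x ^ 2) x := by
  refine (((hasDerivAt_id' x).fun_mul hf'.hasDerivAt).fun_div hf.hasDerivAt hx).congr_deriv ?_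
  ring

lemma monotoneOn_mul_deriv_div {s : Set ℝ} (hs : Convex ℝ s) {f : ℝ → ℝ}
    (hne : ∀ x ∈ s, f x ≠ 0) (hf : ∀ x ∈ s, DifferentiableAt ℝ f x)
    (hf' : ∀ x ∈ s, DifferentiableAt ℝ (deriv f) x)
    (hcond : ∀ x ∈ s, 0 ≤ x * (f x * deriv (deriv f) x - deriv f x ^ 2) + f x * deriv f x) :
    MonotoneOn (fun x => x * deriv f x / f x) s := by
  have hderiv x (hx : x ∈ s) := hasDerivAt_mul_deriv_div (hf x hx) (hf' x hx) (hne x hx)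
  refine monotoneOn_of_hasDerivWithinAt_nonneg hs
    (fun x hx => (hderiv x hx).continuousAt.continuousWithinAt)
    (fun x hx => (hderiv x (interior_subset hx)).hasDerivWithinAt) fun x hx => ?_
  have := hcond x (interior_subset hx)
  positivity

lemma hasDerivAt_log_comp_exp {f : ℝ → ℝ} {t : ℝ} (hf : DifferentiableAt ℝ f (exp t))
    (ht : f (exp t) ≠ 0) :
    HasDerivAt (fun t => log (f (exp t))) (exp t * deriv f (exp t) / f (exp t)) t := by
  have := (hf.hasDerivAt.comp t (hasDerivAt_exp t)).log ht
  rwa [mul_comm] at this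

lemma convexOn_log_comp_exp_of_monotoneOn {s : Set ℝ} (hs : Convex ℝ s) {f : ℝ → ℝ}
    (hne : ∀ x ∈ s, f x ≠ 0) (hf : ∀ x ∈ s, DifferentiableAt ℝ f x)
    (hmono : MonotoneOn (fun x => x * deriv f x / f x) s) :
    ConvexOn ℝ (exp ⁻¹' s) (fun t => log (f (exp t))) := by
  have hderiv t (ht : t ∈ exp ⁻¹' s) := hasDerivAt_log_comp_exp (hf _ ht) (hne _ ht)
  have hmono' : MonotoneOn (deriv fun t => log (f (exp t))) (exp ⁻¹' s) :=
    (hmono.comp (exp_monotone.monotoneOn _) fun _ ht => ht).congr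
      fun t ht => (hderiv t ht).deriv.symm
  exact (hmono'.mono interior_subset).convexOn_of_deriv
    (hs.ordConnected.preimage_mono exp_monotone).convex
    (fun t ht => (hderiv t ht).continuousAt.continuousWithinAt)
    (fun t ht => (hderiv t (interior_subset ht)).differentiableAt.differentiableWithinAt)

lemma GeomConvexOn.of_convexOn_log_comp_exp {s : Set ℝ} (hs : s ⊆ Ioi 0) {f : ℝ → ℝ}
    (hpos : ∀ x ∈ s, 0 < f x) (hconv : ConvexOn ℝ (exp ⁻¹' s) (fun t => log (f (exp t)))) :
    GeomConvexOn s f := by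
  intro x hx y hy l hl
  have hx₀ : 0 < x := hs hx
  have hy₀ : 0 < y := hs hy
  have hlx : log x ∈ exp ⁻¹' s := by rwa [mem_preimage, exp_log hx₀]
  have hly : log y ∈ exp ⁻¹' s := by rwa [mem_preimage, exp_log hy₀]
  have hl' : 0 ≤ 1 - l := sub_nonneg.2 hl.2
  have hmean := exp_mul_log_add_mul_log hx₀ hy₀ l (1 - l)
  have hmem : x ^ l * y ^ (1 - l) ∈ s := by
    simpa only [mem_preimage, smul_eq_mul, hmean] using
      hconv.1 hlx hly hl.1 hl' (add_sub_cancel l 1)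
  have hlog : log (f (x ^ l * y ^ (1 - l))) ≤ l * log (f x) + (1 - l) * log (f y) := by
    simpa only [smul_eq_mul, hmean, exp_log hx₀, exp_log hy₀] using
      hconv.2 hlx hly hl.1 hl' (add_sub_cancel l 1)
  calc f (x ^ l * y ^ (1 - l)) = exp (log (f (x ^ l * y ^ (1 - l)))) :=
        (exp_log (hpos _ hmem)).symm
    _ ≤ exp (l * log (f x) + (1 - l) * log (f y)) := exp_le_exp.2 hlog
    _ = f x ^ l * f y ^ (1 - l) := exp_mul_log_add_mul_log (hpos x hx) (hpos y hy) l (1 - l)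

theorem geom_convex_of_second_order_condition (a b : ℝ) (ha : 0 ≤ a) (f : ℝ → ℝ)
    (hpos : ∀ x ∈ Set.Ioo a b, 0 < f x)
    (hdiff : ∀ x ∈ Set.Ioo a b, DifferentiableAt ℝ f x)
    (hdiff2 : ∀ x ∈ Set.Ioo a b, DifferentiableAt ℝ (deriv f) x)
    (hcond : ∀ x ∈ Set.Ioo a b,
      x * (f x * deriv (deriv f) x - (deriv f x) ^ 2) + f x * deriv f x ≥ 0) :
    ∀ x ∈ Set.Ioo a b, ∀ y ∈ Set.Ioo a b, ∀ l ∈ Set.Icc (0:ℝ) 1,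
      f (x ^ l * y ^ (1 - l)) ≤ f x ^ l * f y ^ (1 - l) := by
  have hne x (hx : x ∈ Ioo a b) : f x ≠ 0 := (hpos x hx).ne'
  have hmono := monotoneOn_mul_deriv_div (convex_Ioo a b) hne hdiff hdiff2 hcond
  exact GeomConvexOn.of_convexOn_log_comp_exp (fun x hx => ha.trans_lt hx.1) hpos
    (convexOn_log_comp_exp_of_monotoneOn (convex_Ioo a b) hne hdiff hmono)
end

section
/- If f : (a,b) → (0,∞) with 0 ≤ a < b is a continuous geometrically concave function, then the function h(x) = ∫_a^x f(t) dt is geometrically concave on (a,b). -/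
open Real Set intervalIntegral

/-!
Geometric concavity of `H x = ∫ₐˣ f` is concavity of `u ↦ log H(eᵘ)`, i.e. antitonicity of the
elasticity `x f(x) / H(x)`. Let `x ≤ y` and `r = y / x`. For `t < x` the pairs `(t, y)` and
`(r t, x)` have the same geometric mean and the second lies inside the first, so geometric
concavity of `f` gives `f(t) f(y) ≤ f(x) f(r t)`. Integrating over `(a, x)` and substituting
`s = r t` yields `y f(y) H(x) ≤ x f(x) ∫_{r a}^{y} f ≤ x f(x) H(y)`.
-/

def GeomConcaveOn (s : Set ℝ) (f : ℝ → ℝ) : Prop :=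
  ∀ x ∈ s, ∀ y ∈ s, ∀ l ∈ Icc (0 : ℝ) 1, f x ^ l * f y ^ (1 - l) ≤ f (x ^ l * y ^ (1 - l))

lemma rpow_mul_rpow_eq_exp {x y : ℝ} (hx : 0 < x) (hy : 0 < y) (l m : ℝ) :
    x ^ l * y ^ m = exp (l * log x + m * log y) := by
  rw [rpow_def_of_pos hx, rpow_def_of_pos hy, ← exp_add]
  ring_nf

lemma GeomConcaveOn.mul_le_mul_of_contract {s : Set ℝ} {f : ℝ → ℝ} (hf : GeomConcaveOn s f)
    (hf0 : ∀ x ∈ s, 0 ≤ f x) {t y r : ℝ} (ht : t ∈ s) (hy : y ∈ s) (ht0 : 0 < t)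
    (hr : 1 ≤ r) (hrt : r * t ≤ y) :
    f t * f y ≤ f (r * t) * f (y / r) := by
  rcases hr.eq_or_lt with rfl | hr1
  · simp
  have hr0 : 0 < r := one_pos.trans hr1
  have hy0 : 0 < y := ht0.trans_le ((le_mul_of_one_le_left ht0.le hr).trans hrt)
  have hlogr : 0 < log r := log_pos hr1
  have hlogyt : log r ≤ log y - log t := by
    rw [← log_div hy0.ne' ht0.ne']
    exact log_le_log hr0 ((le_div_iff₀ ht0).2 hrt)
  obtain ⟨μ, hμ, hμ_mul⟩ : ∃ μ ∈ Icc (0 : ℝ) 1, μ * (log y - log t) = log r :=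
    ⟨log r / (log y - log t),
      ⟨div_nonneg hlogr.le (by linarith), (div_le_one (by linarith)).2 hlogyt⟩,
      div_mul_cancel₀ _ (by linarith)⟩
  have hμ' : 1 - μ ∈ Icc (0 : ℝ) 1 := ⟨by linarith [hμ.2], by linarith [hμ.1]⟩
  have hrt_eq : t ^ (1 - μ) * y ^ (1 - (1 - μ)) = r * t := by
    rw [rpow_mul_rpow_eq_exp ht0 hy0, ← exp_log (mul_pos hr0 ht0), log_mul hr0.ne' ht0.ne']
    congr 1
    linear_combination hμ_mul
  have hyr_eq : t ^ μ * y ^ (1 - μ) = y / r := by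
    rw [rpow_mul_rpow_eq_exp ht0 hy0, ← exp_log (div_pos hy0 hr0), log_div hy0.ne' hr0.ne']
    congr 1
    linear_combination -hμ_mul
  have h1 := hf t ht y hy (1 - μ) hμ'
  have h2 := hf t ht y hy μ hμ
  rw [hrt_eq] at h1
  rw [hyr_eq] at h2
  have hft := hf0 t ht
  have hfy := hf0 y hy
  calc f t * f y = (f t ^ (1 - μ) * f y ^ (1 - (1 - μ))) * (f t ^ μ * f y ^ (1 - μ)) := by
        rw [mul_mul_mul_comm, ← rpow_add' hft (by norm_num), ← rpow_add' hfy (by norm_num)]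
        norm_num
    _ ≤ f (r * t) * f (y / r) :=
        mul_le_mul h1 h2 (by positivity)
          ((mul_nonneg (rpow_nonneg hft _) (rpow_nonneg hfy _)).trans h1)

section IntervalIntegral

variable {a b : ℝ} {f : ℝ → ℝ}

lemma integral_pos_of_mem_Ioo (hpos : ∀ x ∈ Ioo a b, 0 < f x)
    (hint : ∀ x ∈ Ioo a b, IntervalIntegrable f MeasureTheory.volume a x) {x : ℝ}
    (hx : x ∈ Ioo a b) : 0 < ∫ t in a..x, f t :=
  intervalIntegral_pos_of_pos_on (hint x hx) (fun t ht => hpos t ⟨ht.1, ht.2.trans hx.2⟩) hx.1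

lemma GeomConcaveOn.antitoneOn_mul_div_integral (ha : 0 ≤ a) (hf : GeomConcaveOn (Ioo a b) f)
    (hpos : ∀ x ∈ Ioo a b, 0 < f x)
    (hint : ∀ x ∈ Ioo a b, IntervalIntegrable f MeasureTheory.volume a x) :
    AntitoneOn (fun x => x * f x / ∫ t in a..x, f t) (Ioo a b) := by
  intro x hx y hy hxy
  have hx0 : 0 < x := ha.trans_lt hx.1
  dsimp only
  rw [div_le_div_iff₀ (integral_pos_of_mem_Ioo hpos hint hy)
    (integral_pos_of_mem_Ioo hpos hint hx)]
  set r := y / x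
  have hr : 1 ≤ r := (one_le_div hx0).2 hxy
  have hr0 : r ≠ 0 := by positivity
  have hrx : r * x = y := div_mul_cancel₀ _ hx0.ne'
  have hyr : y / r = x := div_div_cancel₀ (ha.trans_lt hy.1).ne'
  have hra : a ≤ r * a := le_mul_of_one_le_left ha hr
  have hray : r * a ≤ y := hrx ▸ mul_le_mul_of_nonneg_left hx.1.le (by positivity)
  have hint_ra : IntervalIntegrable f MeasureTheory.volume (r * a) y :=
    (hint y hy).mono_set (uIcc_subset_uIcc (mem_uIcc_of_le hra hray) right_mem_uIcc)
  have hint_comp : IntervalIntegrable (fun t => f (r * t)) MeasureTheory.volume a x := by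
    simpa [hr0, ← hyr] using hint_ra.comp_mul_left (c := r)
  have hpt : ∀ t ∈ Ioo a x, f t * f y ≤ f x * f (r * t) := by
    intro t ht
    have := hf.mul_le_mul_of_contract (fun z hz => (hpos z hz).le) ⟨ht.1, ht.2.trans hx.2⟩ hy
      (ha.trans_lt ht.1) hr (hrx ▸ mul_le_mul_of_nonneg_left ht.2.le (by positivity))
    rwa [hyr, mul_comm (f (r * t))] at this
  calc y * f y * ∫ t in a..x, f t = y * ∫ t in a..x, f t * f y := by
        rw [intervalIntegral.integral_mul_const]; ring
    _ ≤ y * ∫ t in a..x, f x * f (r * t) := by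
        refine mul_le_mul_of_nonneg_left ?_ (hx0.le.trans hxy)
        exact integral_mono_on_of_le_Ioo hx.1.le ((hint x hx).mul_const _)
          (hint_comp.const_mul _) hpt
    _ = x * f x * ∫ t in r * a..y, f t := by
        rw [intervalIntegral.integral_const_mul, integral_comp_mul_left _ hr0, hrx, smul_eq_mul]
        field_simp
        rw [← hrx]
        ring
    _ ≤ x * f x * ∫ t in a..y, f t := by
        refine mul_le_mul_of_nonneg_left ?_ (mul_pos hx0 (hpos x hx)).le
        exact integral_mono_interval hra hray le_rfl
          (MeasureTheory.ae_restrict_of_forall_mem measurableSet_Ioc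
            fun t ht => (hpos t ⟨ht.1, ht.2.trans_lt hy.2⟩).le) (hint y hy)

end IntervalIntegral

lemma geomConcaveOn_of_concaveOn_log_comp_exp {s : Set ℝ} {h : ℝ → ℝ} (hs : s ⊆ Ioi 0)
    (hpos : ∀ x ∈ s, 0 < h x) (hconc : ConcaveOn ℝ (exp ⁻¹' s) fun u => log (h (exp u))) :
    GeomConcaveOn s h := by
  intro x hx y hy l hl
  have hx0 : 0 < x := hs hx
  have hy0 : 0 < y := hs hy
  have hlog_mem : ∀ z ∈ s, log z ∈ exp ⁻¹' s := fun z hz => by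
    rwa [mem_preimage, exp_log (hs hz)]
  have hmean : exp (l * log x + (1 - l) * log y) = x ^ l * y ^ (1 - l) :=
    (rpow_mul_rpow_eq_exp hx0 hy0 l (1 - l)).symm
  have hmean_mem : x ^ l * y ^ (1 - l) ∈ s := by
    rw [← hmean]
    exact hconc.1 (hlog_mem x hx) (hlog_mem y hy) hl.1 (sub_nonneg.2 hl.2) (by ring)
  have hineq := hconc.2 (hlog_mem x hx) (hlog_mem y hy) hl.1 (sub_nonneg.2 hl.2) (by ring)
  simp only [smul_eq_mul, exp_log hx0, exp_log hy0, hmean] at hineq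
  rw [rpow_mul_rpow_eq_exp (hpos x hx) (hpos y hy), ← exp_log (hpos _ hmean_mem)]
  exact exp_le_exp.2 hineq

lemma geomConcaveOn_of_antitoneOn_mul_deriv_div {a b : ℝ} {h h' : ℝ → ℝ} (ha : 0 ≤ a)
    (hpos : ∀ x ∈ Ioo a b, 0 < h x) (hderiv : ∀ x ∈ Ioo a b, HasDerivAt h (h' x) x)
    (hanti : AntitoneOn (fun x => x * h' x / h x) (Ioo a b)) :
    GeomConcaveOn (Ioo a b) h := by
  refine geomConcaveOn_of_concaveOn_log_comp_exp (fun x hx => ha.trans_lt hx.1) hpos ?_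
  have hD_open : IsOpen (exp ⁻¹' Ioo a b) := isOpen_Ioo.preimage continuous_exp
  have hderiv_log : ∀ u ∈ exp ⁻¹' Ioo a b, HasDerivAt (fun u => log (h (exp u)))
      (exp u * h' (exp u) / h (exp u)) u := fun u hu => by
    simpa only [mul_comm, Function.comp_apply] using
      ((hderiv _ hu).comp u (hasDerivAt_exp u)).log (hpos _ hu).ne'
  refine AntitoneOn.concaveOn_of_deriv (ordConnected_Ioo.preimage_mono exp_monotone).convex
    (fun u hu => (hderiv_log u hu).continuousAt.continuousWithinAt) ?_ ?_ <;>
    rw [hD_open.interior_eq]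
  · exact fun u hu => (hderiv_log u hu).differentiableAt.differentiableWithinAt
  · intro u hu v hv huv
    rw [(hderiv_log u hu).deriv, (hderiv_log v hv).deriv]
    exact hanti hu hv (exp_le_exp.2 huv)

theorem integral_geom_concave_general (a b : ℝ) (ha : 0 ≤ a) (f : ℝ → ℝ)
    (hcont : ContinuousOn f (Set.Ioo a b))
    (hpos : ∀ x ∈ Set.Ioo a b, 0 < f x)
    (hint : ∀ x ∈ Set.Ioo a b, IntervalIntegrable f MeasureTheory.volume a x)
    (hgc : ∀ x ∈ Set.Ioo a b, ∀ y ∈ Set.Ioo a b, ∀ l ∈ Set.Icc (0:ℝ) 1,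
      f (x ^ l * y ^ (1 - l)) ≥ f x ^ l * f y ^ (1 - l)) :
    ∀ x ∈ Set.Ioo a b, ∀ y ∈ Set.Ioo a b, ∀ l ∈ Set.Icc (0:ℝ) 1,
      (∫ t in a..(x ^ l * y ^ (1 - l)), f t)
        ≥ (∫ t in a..x, f t) ^ l * (∫ t in a..y, f t) ^ (1 - l) := by
  have hftc : ∀ x ∈ Ioo a b, HasDerivAt (fun x => ∫ t in a..x, f t) (f x) x := fun x hx =>
    have hnhds : Ioo a b ∈ nhds x := Ioo_mem_nhds hx.1 hx.2
    integral_hasDerivAt_right (hint x hx) (hcont.stronglyMeasurableAtFilter isOpen_Ioo x hx)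
      (hcont.continuousAt hnhds)
  exact geomConcaveOn_of_antitoneOn_mul_deriv_div ha
    (fun x hx => integral_pos_of_mem_Ioo hpos hint hx) hftc
    (GeomConcaveOn.antitoneOn_mul_div_integral ha hgc hpos hint)

theorem integral_geom_concave (a b : ℝ) (ha : 0 ≤ a) (hab : a < b) (f : ℝ → ℝ)
    (hcont : ContinuousOn f (Set.Ioo a b))
    (hpos : ∀ x ∈ Set.Ioo a b, 0 < f x)
    (hint : ∀ x ∈ Set.Ioo a b, IntervalIntegrable f MeasureTheory.volume a x)
    (hgc : ∀ x ∈ Set.Ioo a b, ∀ y ∈ Set.Ioo a b, ∀ l ∈ Set.Icc (0:ℝ) 1,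
      f (x ^ l * y ^ (1 - l)) ≥ f x ^ l * f y ^ (1 - l)) :
    ∀ x ∈ Set.Ioo a b, ∀ y ∈ Set.Ioo a b, ∀ l ∈ Set.Icc (0:ℝ) 1,
      (∫ t in a..(x ^ l * y ^ (1 - l)), f t)
        ≥ (∫ t in a..x, f t) ^ l * (∫ t in a..y, f t) ^ (1 - l) :=
  integral_geom_concave_general a b ha f hcont hpos hint hgc
end

section
/- For p, q > 1 and r, s ∈ (0,1), sin_{p,q}(√(rs)) ≥ √(sin_{p,q}(r) · sin_{p,q}(s)). -/
open Real Set intervalIntegral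

namespace SinPQ

variable {p q : ℝ}

lemma base_pos (hq : 1 < q) {t : ℝ} (h0 : 0 ≤ t) (h1 : t < 1) : 0 < 1 - t ^ q := by
  rcases eq_or_lt_of_le h0 with h | h
  · rw [← h, Real.zero_rpow (by linarith : q ≠ 0)]; norm_num
  · have : t ^ q < 1 := Real.rpow_lt_one h0 h1 (by linarith)
    linarith

lemma one_le_integrand (hp : 1 < p) (hq : 1 < q) {t : ℝ} (h0 : 0 ≤ t) (h1 : t < 1) :
    1 ≤ (1 - t ^ q) ^ (-1/p) := by
  refine Real.one_le_rpow_of_pos_of_le_one_of_nonpos (base_pos hq h0 h1) ?_ ?_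
  · have : 0 ≤ t ^ q := Real.rpow_nonneg h0 q
    linarith
  · have hp0 : 0 < p := by linarith
    rw [neg_div]
    exact neg_nonpos.mpr (by positivity)

lemma cont_integrand' (hp : 1 < p) (hq : 1 < q) {d : ℝ} (h0 : 0 ≤ d) (h1 : d < 1) :
    ContinuousOn (fun t : ℝ => (1 - t ^ q) ^ (-1/p)) (Icc 0 d) := by
  apply ContinuousOn.rpow_const
  · apply continuousOn_const.sub
    apply ContinuousOn.rpow_const continuousOn_id
    exact fun x _ => Or.inr (by linarith)
  · exact fun x hx => Or.inl (base_pos hq hx.1 (lt_of_le_of_lt hx.2 h1)).ne'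

lemma cont_integrand (hp : 1 < p) (hq : 1 < q) {c : ℝ} (h0 : 0 ≤ c) (h1 : c < 1) :
    ContinuousOn (fun s : ℝ => (1 - (c * s) ^ q) ^ (-1/p)) (Icc 0 1) := by
  apply ContinuousOn.rpow_const
  · apply continuousOn_const.sub
    apply ContinuousOn.rpow_const
    · exact (continuous_const.mul continuous_id).continuousOn
    · exact fun x _ => Or.inr (by linarith)
  · intro x hx
    exact Or.inl (base_pos hq (mul_nonneg h0 hx.1)
      (lt_of_le_of_lt (mul_le_of_le_one_right h0 hx.2) h1)).ne'

lemma intgr (hp : 1 < p) (hq : 1 < q) {x y : ℝ} (h0 : 0 ≤ x) (hxy : x ≤ y) (h1 : y < 1) :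
    IntervalIntegrable (fun t : ℝ => (1 - t ^ q) ^ (-1/p)) MeasureTheory.volume x y := by
  apply ContinuousOn.intervalIntegrable
  rw [uIcc_of_le hxy]
  exact (cont_integrand' hp hq (le_trans h0 hxy) h1).mono (Icc_subset_Icc h0 le_rfl)

lemma F_ge (hp : 1 < p) (hq : 1 < q) {d : ℝ} (h0 : 0 ≤ d) (h1 : d < 1) :
    d ≤ ∫ t in (0:ℝ)..d, (1 - t ^ q) ^ (-1/p) := by
  have h := intervalIntegral.integral_mono_on (f := fun _ => (1:ℝ)) h0
    intervalIntegrable_const (intgr hp hq le_rfl h0 h1)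
    (fun x hx => one_le_integrand hp hq hx.1 (lt_of_le_of_lt hx.2 h1))
  simpa using h

lemma F_lt (hp : 1 < p) (hq : 1 < q) {x y : ℝ} (h0 : 0 ≤ x) (hxy : x < y) (h1 : y < 1) :
    (∫ t in (0:ℝ)..x, (1 - t ^ q) ^ (-1/p)) < ∫ t in (0:ℝ)..y, (1 - t ^ q) ^ (-1/p) := by
  have hadd := intervalIntegral.integral_add_adjacent_intervals
    (intgr hp hq le_rfl h0 (lt_trans hxy h1))
    (intgr hp hq h0 hxy.le h1)
  have hpos := intervalIntegral_pos_of_pos_on (intgr hp hq h0 hxy.le h1)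
    (fun t ht => Real.rpow_pos_of_pos (base_pos hq (le_trans h0 ht.1.le) (ht.2.trans h1)) _) hxy
  linarith

lemma cs (g h : ℝ → ℝ) (hgc : ContinuousOn g (Icc 0 1)) (hhc : ContinuousOn h (Icc 0 1))
    (hg0 : ∀ s ∈ Icc (0:ℝ) 1, 0 ≤ g s) (hh0 : ∀ s ∈ Icc (0:ℝ) 1, 0 ≤ h s)
    (hA : 0 < ∫ s in (0:ℝ)..1, g s) (hB : 0 < ∫ s in (0:ℝ)..1, h s) :
    (∫ s in (0:ℝ)..1, Real.sqrt (g s * h s)) ≤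
      Real.sqrt ((∫ s in (0:ℝ)..1, g s) * ∫ s in (0:ℝ)..1, h s) := by
  set A := ∫ s in (0:ℝ)..1, g s with hAdef
  set B := ∫ s in (0:ℝ)..1, h s with hBdef
  set α := Real.sqrt A with hαdef
  set β := Real.sqrt B with hβdef
  have hα : 0 < α := Real.sqrt_pos.mpr hA
  have hβ : 0 < β := Real.sqrt_pos.mpr hB
  have hA2 : α ^ 2 = A := Real.sq_sqrt hA.le
  have hB2 : β ^ 2 = B := Real.sq_sqrt hB.le
  have hgint : IntervalIntegrable g MeasureTheory.volume 0 1 :=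
    ContinuousOn.intervalIntegrable (by rwa [uIcc_of_le zero_le_one])
  have hhint : IntervalIntegrable h MeasureTheory.volume 0 1 :=
    ContinuousOn.intervalIntegrable (by rwa [uIcc_of_le zero_le_one])
  have hsint : IntervalIntegrable (fun s => Real.sqrt (g s * h s)) MeasureTheory.volume 0 1 := by
    apply ContinuousOn.intervalIntegrable
    rw [uIcc_of_le zero_le_one]
    exact Real.continuous_sqrt.comp_continuousOn (hgc.mul hhc)
  have key : ∫ s in (0:ℝ)..1, (2*α*β) * Real.sqrt (g s * h s) ≤
      ∫ s in (0:ℝ)..1, (β^2 * g s + α^2 * h s) := by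
    apply intervalIntegral.integral_mono_on zero_le_one (hsint.const_mul _)
      ((hgint.const_mul _).add (hhint.const_mul _))
    intro x hx
    have h1 : Real.sqrt (g x * h x) = Real.sqrt (g x) * Real.sqrt (h x) :=
      Real.sqrt_mul (hg0 x hx) _
    rw [h1]
    nlinarith [sq_nonneg (β * Real.sqrt (g x) - α * Real.sqrt (h x)),
      Real.sq_sqrt (hg0 x hx), Real.sq_sqrt (hh0 x hx),
      Real.sqrt_nonneg (g x), Real.sqrt_nonneg (h x), hα.le, hβ.le]
  rw [intervalIntegral.integral_const_mul,
    intervalIntegral.integral_add (hgint.const_mul _) (hhint.const_mul _),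
    intervalIntegral.integral_const_mul, intervalIntegral.integral_const_mul] at key
  have hAB : Real.sqrt (A*B) = α * β := Real.sqrt_mul hA.le B
  rw [hAB]
  nlinarith [key, mul_pos hα hβ]

lemma pointwise_gg (hp : 1 < p) (hq : 1 < q) {u v w : ℝ} (hu0 : 0 ≤ u) (hu1 : u < 1)
    (hv0 : 0 ≤ v) (hv1 : v < 1) (hw0 : 0 ≤ w) (hw1 : w < 1) (hw2 : w ^ 2 = u * v) :
    (1 - w ^ q) ^ (-1/p) ≤
      Real.sqrt ((1 - u ^ q) ^ (-1/p) * (1 - v ^ q) ^ (-1/p)) := by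
  have hp0 : 0 < p := by linarith
  set A := u ^ (q/2) with hAdef
  set B := v ^ (q/2) with hBdef
  have hA0 : 0 ≤ A := Real.rpow_nonneg hu0 _
  have hB0 : 0 ≤ B := Real.rpow_nonneg hv0 _
  have hA1 : A < 1 := Real.rpow_lt_one hu0 hu1 (by linarith)
  have hB1 : B < 1 := Real.rpow_lt_one hv0 hv1 (by linarith)
  have hwq : w ^ q = A * B := by
    have e1 : w ^ q = (w ^ (2:ℝ)) ^ (q/2) := by
      rw [← Real.rpow_mul hw0]
      congr 1
      ring
    rw [e1, Real.rpow_two, hw2, Real.mul_rpow hu0 hv0]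
  have huq : u ^ q = A ^ 2 := by
    rw [hAdef, ← Real.rpow_two, ← Real.rpow_mul hu0]
    congr 1
    ring
  have hvq : v ^ q = B ^ 2 := by
    rw [hBdef, ← Real.rpow_two, ← Real.rpow_mul hv0]
    congr 1
    ring
  have hXu : 0 < 1 - u ^ q := base_pos hq hu0 hu1
  have hXv : 0 < 1 - v ^ q := base_pos hq hv0 hv1
  have hXw : 0 < 1 - w ^ q := base_pos hq hw0 hw1
  have hX : 0 < (1 - u ^ q) * (1 - v ^ q) := mul_pos hXu hXv
  have hXle : (1 - u ^ q) * (1 - v ^ q) ≤ (1 - w ^ q) ^ 2 := by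
    rw [hwq, huq, hvq]
    nlinarith [sq_nonneg (A - B)]
  have hexp : (-1/p) * (1/2) ≤ 0 := by
    rw [neg_div]
    exact mul_nonpos_of_nonpos_of_nonneg (neg_nonpos.mpr (by positivity)) (by norm_num)
  calc (1 - w ^ q) ^ (-1/p)
      = ((1 - w ^ q) ^ 2) ^ ((-1/p) * (1/2)) := by
        rw [← Real.rpow_two, ← Real.rpow_mul hXw.le]
        congr 1
        field_simp
    _ ≤ ((1 - u ^ q) * (1 - v ^ q)) ^ ((-1/p) * (1/2)) :=
        Real.rpow_le_rpow_of_nonpos hX hXle hexp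
    _ = Real.sqrt ((1 - u ^ q) ^ (-1/p) * (1 - v ^ q) ^ (-1/p)) := by
        rw [← Real.mul_rpow hXu.le hXv.le, Real.sqrt_eq_rpow,
          ← Real.rpow_mul hX.le]

lemma keyIneq (hp : 1 < p) (hq : 1 < q) {a b : ℝ} (ha : a ∈ Ioo (0:ℝ) 1)
    (hb : b ∈ Ioo (0:ℝ) 1) :
    (∫ t in (0:ℝ)..Real.sqrt (a*b), (1 - t ^ q) ^ (-1/p)) ≤
      Real.sqrt ((∫ t in (0:ℝ)..a, (1 - t ^ q) ^ (-1/p)) *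
        ∫ t in (0:ℝ)..b, (1 - t ^ q) ^ (-1/p)) := by
  obtain ⟨ha0, ha1⟩ := ha
  obtain ⟨hb0, hb1⟩ := hb
  set c := Real.sqrt (a*b) with hcdef
  have hc0 : 0 < c := Real.sqrt_pos.mpr (by positivity)
  have hc1 : c < 1 := by
    rw [hcdef, show (1:ℝ) = Real.sqrt 1 by rw [Real.sqrt_one]]
    exact Real.sqrt_lt_sqrt (by positivity) (by nlinarith)
  have scale : ∀ d : ℝ, 0 < d →
      (∫ t in (0:ℝ)..d, (1 - t ^ q) ^ (-1/p)) =
        d * ∫ s in (0:ℝ)..1, (1 - (d*s) ^ q) ^ (-1/p) := by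
    intro d hd
    have h := intervalIntegral.smul_integral_comp_mul_left (a := 0) (b := 1)
      (fun t : ℝ => (1 - t ^ q) ^ (-1/p)) d
    simp only [mul_zero, mul_one, smul_eq_mul] at h
    rw [← h]
  set Ia := ∫ s in (0:ℝ)..1, (1 - (a*s) ^ q) ^ (-1/p) with hIa
  set Ib := ∫ s in (0:ℝ)..1, (1 - (b*s) ^ q) ^ (-1/p) with hIb
  set Ic := ∫ s in (0:ℝ)..1, (1 - (c*s) ^ q) ^ (-1/p) with hIc
  have intIa : IntervalIntegrable (fun s : ℝ => (1 - (a*s) ^ q) ^ (-1/p))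
      MeasureTheory.volume 0 1 :=
    ContinuousOn.intervalIntegrable (by rw [uIcc_of_le zero_le_one]; exact cont_integrand hp hq ha0.le ha1)
  have intIb : IntervalIntegrable (fun s : ℝ => (1 - (b*s) ^ q) ^ (-1/p))
      MeasureTheory.volume 0 1 :=
    ContinuousOn.intervalIntegrable (by rw [uIcc_of_le zero_le_one]; exact cont_integrand hp hq hb0.le hb1)
  have intIc : IntervalIntegrable (fun s : ℝ => (1 - (c*s) ^ q) ^ (-1/p))
      MeasureTheory.volume 0 1 :=
    ContinuousOn.intervalIntegrable (by rw [uIcc_of_le zero_le_one]; exact cont_integrand hp hq hc0.le hc1)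
  have hIa1 : 1 ≤ Ia := by
    have h := intervalIntegral.integral_mono_on (f := fun _ => (1:ℝ)) zero_le_one
      intervalIntegrable_const intIa
      (fun x hx => one_le_integrand hp hq (mul_nonneg ha0.le hx.1)
        (lt_of_le_of_lt (mul_le_of_le_one_right ha0.le hx.2) ha1))
    simpa using h
  have hIb1 : 1 ≤ Ib := by
    have h := intervalIntegral.integral_mono_on (f := fun _ => (1:ℝ)) zero_le_one
      intervalIntegrable_const intIb
      (fun x hx => one_le_integrand hp hq (mul_nonneg hb0.le hx.1)
        (lt_of_le_of_lt (mul_le_of_le_one_right hb0.le hx.2) hb1))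
    simpa using h
  have hsqc : ContinuousOn
      (fun s : ℝ => Real.sqrt ((1 - (a*s) ^ q) ^ (-1/p) * (1 - (b*s) ^ q) ^ (-1/p)))
      (Icc 0 1) :=
    Real.continuous_sqrt.comp_continuousOn
      ((cont_integrand hp hq ha0.le ha1).mul (cont_integrand hp hq hb0.le hb1))
  have intsq : IntervalIntegrable
      (fun s : ℝ => Real.sqrt ((1 - (a*s) ^ q) ^ (-1/p) * (1 - (b*s) ^ q) ^ (-1/p)))
      MeasureTheory.volume 0 1 :=
    ContinuousOn.intervalIntegrable (by rw [uIcc_of_le zero_le_one]; exact hsqc)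
  have step1 : Ic ≤ ∫ s in (0:ℝ)..1,
      Real.sqrt ((1 - (a*s) ^ q) ^ (-1/p) * (1 - (b*s) ^ q) ^ (-1/p)) := by
    apply intervalIntegral.integral_mono_on zero_le_one intIc intsq
    intro x hx
    apply pointwise_gg hp hq (mul_nonneg ha0.le hx.1)
      (lt_of_le_of_lt (mul_le_of_le_one_right ha0.le hx.2) ha1)
      (mul_nonneg hb0.le hx.1)
      (lt_of_le_of_lt (mul_le_of_le_one_right hb0.le hx.2) hb1)
      (mul_nonneg hc0.le hx.1)
      (lt_of_le_of_lt (mul_le_of_le_one_right hc0.le hx.2) hc1)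
    have hcc : c ^ 2 = a * b := Real.sq_sqrt (by positivity)
    rw [mul_pow, hcc]
    ring
  have step2 : (∫ s in (0:ℝ)..1,
      Real.sqrt ((1 - (a*s) ^ q) ^ (-1/p) * (1 - (b*s) ^ q) ^ (-1/p))) ≤
      Real.sqrt (Ia * Ib) := by
    apply cs _ _ (cont_integrand hp hq ha0.le ha1) (cont_integrand hp hq hb0.le hb1)
      (fun s hs => Real.rpow_nonneg (base_pos hq (mul_nonneg ha0.le hs.1)
        (lt_of_le_of_lt (mul_le_of_le_one_right ha0.le hs.2) ha1)).le _)
      (fun s hs => Real.rpow_nonneg (base_pos hq (mul_nonneg hb0.le hs.1)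
        (lt_of_le_of_lt (mul_le_of_le_one_right hb0.le hs.2) hb1)).le _)
      (by linarith) (by linarith)
  rw [scale a ha0, scale b hb0, scale c hc0]
  have hrhs : Real.sqrt ((a * Ia) * (b * Ib)) = c * Real.sqrt (Ia * Ib) := by
    rw [show (a * Ia) * (b * Ib) = (a*b) * (Ia * Ib) by ring,
      Real.sqrt_mul (by positivity)]
  rw [hrhs]
  calc c * Ic ≤ c * Real.sqrt (Ia * Ib) := by
        apply mul_le_mul_of_nonneg_left (le_trans step1 step2) hc0.le

end SinPQ

theorem sin_pq_sqrt_ineq (p q : ℝ) (hp : 1 < p) (hq : 1 < q) (S : ℝ → ℝ)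
    (hS : ∀ x ∈ Set.Icc (0:ℝ) 1,
      S (∫ t in (0:ℝ)..x, (1 - t ^ q) ^ (-1/p)) = x) :
    ∀ r ∈ Set.Ioo (0:ℝ) 1, ∀ s ∈ Set.Ioo (0:ℝ) 1,
      S (Real.sqrt (r * s)) ≥ Real.sqrt (S r * S s) := by
  intro r hr s hs
  have hrs0 : 0 < r * s := mul_pos hr.1 hs.1
  have hrs1 : r * s < 1 := by nlinarith [hr.1, hr.2, hs.1, hs.2]
  have hinv : ∀ u : ℝ, 0 < u → u < 1 →
      ∃ x, 0 < x ∧ x ≤ u ∧ (∫ t in (0:ℝ)..x, (1 - t ^ q) ^ (-1/p)) = u := by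
    intro u hu0 hu1
    have hcont : ContinuousOn (fun x => ∫ t in (0:ℝ)..x, (1 - t ^ q) ^ (-1/p)) (Icc 0 u) := by
      have h := intervalIntegral.continuousOn_primitive_interval (a := 0) (b := u)
        (μ := MeasureTheory.volume) (f := fun t : ℝ => (1 - t ^ q) ^ (-1/p)) ?_
      · rwa [uIcc_of_le hu0.le] at h
      · rw [uIcc_of_le hu0.le]
        exact (SinPQ.cont_integrand' hp hq hu0.le hu1).integrableOn_Icc
    have hIVT := intermediate_value_Icc hu0.le hcont
    have h0 : (∫ t in (0:ℝ)..(0:ℝ), (1 - t ^ q) ^ (-1/p)) = 0 :=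
      intervalIntegral.integral_same
    have hu : u ≤ ∫ t in (0:ℝ)..u, (1 - t ^ q) ^ (-1/p) := SinPQ.F_ge hp hq hu0.le hu1
    have hmem : u ∈ Icc (∫ t in (0:ℝ)..(0:ℝ), (1 - t ^ q) ^ (-1/p))
        (∫ t in (0:ℝ)..u, (1 - t ^ q) ^ (-1/p)) := ⟨by rw [h0]; exact hu0.le, hu⟩
    obtain ⟨x, hx, hxu⟩ := hIVT hmem
    refine ⟨x, ?_, hx.2, hxu⟩
    rcases eq_or_lt_of_le hx.1 with h | h
    · exfalso
      rw [← h] at hxu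
      simp only [intervalIntegral.integral_same] at hxu
      linarith
    · exact h
  obtain ⟨a, ha0, har, hFa⟩ := hinv r hr.1 hr.2
  obtain ⟨b, hb0, hbs, hFb⟩ := hinv s hs.1 hs.2
  have hsrs0 : 0 < Real.sqrt (r*s) := Real.sqrt_pos.mpr hrs0
  have hsrs1 : Real.sqrt (r*s) < 1 := by
    rw [show (1:ℝ) = Real.sqrt 1 by rw [Real.sqrt_one]]
    exact Real.sqrt_lt_sqrt hrs0.le hrs1
  obtain ⟨c, hc0, hcrs, hFc⟩ := hinv (Real.sqrt (r*s)) hsrs0 hsrs1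
  have ha1 : a < 1 := lt_of_le_of_lt har hr.2
  have hb1 : b < 1 := lt_of_le_of_lt hbs hs.2
  have hSr : S r = a := by rw [← hFa]; exact hS a ⟨ha0.le, by linarith⟩
  have hSs : S s = b := by rw [← hFb]; exact hS b ⟨hb0.le, by linarith⟩
  have hSrs : S (Real.sqrt (r*s)) = c := by
    rw [← hFc]; exact hS c ⟨hc0.le, by linarith⟩
  rw [hSr, hSs, hSrs, ge_iff_le]
  by_contra hcon
  push_neg at hcon
  have hab1 : Real.sqrt (a*b) < 1 := by
    rw [show (1:ℝ) = Real.sqrt 1 by rw [Real.sqrt_one]]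
    exact Real.sqrt_lt_sqrt (by positivity) (by nlinarith)
  have hkey := SinPQ.keyIneq hp hq ⟨ha0, ha1⟩ ⟨hb0, hb1⟩
  rw [hFa, hFb] at hkey
  have hlt := SinPQ.F_lt hp hq hc0.le hcon hab1
  rw [hFc] at hlt
  linarith
end

section
/- For p, q > 1, the generalized inverse hyperbolic sine arcsinh_{p,q}(x) = ∫_0^x (1+t^q)^(-1/p) dt is geometrically concave on (0,∞): for all x, y > 0 and λ ∈ [0,1], arcsinh_{p,q}(x^λ y^(1-λ)) ≥ arcsinh_{p,q}(x)^λ · arcsinh_{p,q}(y)^(1-λ). -/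
/-!
Write `F` for the primitive of `f t = (1 + t ^ q) ^ (-1/p)` vanishing at `0`. Geometric concavity
of `F` is concavity of `u ↦ log F (exp u)`, whose derivative is the elasticity `x f x / F x` at
`x = exp u`. Since `F x / (x f x) = ∫ τ in 0..1, f (x τ) / f x`, the elasticity decreases as soon
as every ratio `f (x τ) / f x` with `τ ∈ [0, 1]` increases in `x`; for `f = (1 + t ^ q) ^ a` with
`a ≤ 0` this says that `(1 + (x τ) ^ q) / (1 + x ^ q)` decreases in `x`.
-/

open Real Set intervalIntegral

section IntegralFromZero

variable {f : ℝ → ℝ}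

lemma intervalIntegrable_of_continuousOn_Ici (hcont : ContinuousOn f (Ici 0)) {a b : ℝ}
    (ha : 0 ≤ a) (hb : 0 ≤ b) : IntervalIntegrable f MeasureTheory.volume a b :=
  (hcont.mono fun _ ht => le_trans (le_min ha hb) ht.1).intervalIntegrable

lemma integral_zero_pos (hcont : ContinuousOn f (Ici 0)) (hpos : ∀ t, 0 < t → 0 < f t)
    {x : ℝ} (hx : 0 < x) : 0 < ∫ t in (0:ℝ)..x, f t :=
  intervalIntegral_pos_of_pos_on (intervalIntegrable_of_continuousOn_Ici hcont le_rfl hx.le)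
    (fun t ht => hpos t ht.1) hx

lemma hasDerivAt_integral_zero (hcont : ContinuousOn f (Ici 0)) {x : ℝ} (hx : 0 < x) :
    HasDerivAt (fun x => ∫ t in (0:ℝ)..x, f t) (f x) x :=
  integral_hasDerivAt_right (intervalIntegrable_of_continuousOn_Ici hcont le_rfl hx.le)
    ((hcont.mono Ioi_subset_Ici_self).stronglyMeasurableAtFilter isOpen_Ioi x hx)
    (hcont.continuousAt (Ici_mem_nhds hx))

lemma integral_zero_div_mul_self_eq {x : ℝ} (hx : x ≠ 0) :
    (∫ t in (0:ℝ)..x, f t) / (x * f x) = ∫ τ in (0:ℝ)..1, f (x * τ) / f x := by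
  rw [integral_div, ← mul_div_mul_left (∫ τ in (0:ℝ)..1, f (x * τ)) (f x) hx,
    mul_integral_comp_mul_left, mul_zero, mul_one]

lemma monotoneOn_integral_zero_div_mul_self (hcont : ContinuousOn f (Ici 0))
    (hmono : ∀ τ ∈ Icc (0:ℝ) 1, MonotoneOn (fun x => f (x * τ) / f x) (Ioi 0)) :
    MonotoneOn (fun x => (∫ t in (0:ℝ)..x, f t) / (x * f x)) (Ioi 0) := by
  intro x₁ hx₁ x₂ hx₂ hle
  have hint : ∀ x ∈ Ioi (0:ℝ),
      IntervalIntegrable (fun τ => f (x * τ) / f x) MeasureTheory.volume 0 1 := by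
    intro x hx
    refine (ContinuousOn.div_const ?_ _).intervalIntegrable
    refine hcont.comp (continuousOn_const.mul continuousOn_id) fun τ hτ => ?_
    rw [uIcc_of_le zero_le_one] at hτ
    exact mul_nonneg hx.le hτ.1
  simp only [integral_zero_div_mul_self_eq hx₁.ne', integral_zero_div_mul_self_eq hx₂.ne']
  exact integral_mono_on zero_le_one (hint x₁ hx₁) (hint x₂ hx₂)
    fun τ hτ => hmono τ hτ hx₁ hx₂ hle

lemma concaveOn_log_integral_zero_exp (hcont : ContinuousOn f (Ici 0))
    (hpos : ∀ t, 0 < t → 0 < f t)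
    (hmono : ∀ τ ∈ Icc (0:ℝ) 1, MonotoneOn (fun x => f (x * τ) / f x) (Ioi 0)) :
    ConcaveOn ℝ univ fun u => log (∫ t in (0:ℝ)..exp u, f t) := by
  have hderiv : ∀ u, HasDerivAt (fun u => log (∫ t in (0:ℝ)..exp u, f t))
      (exp u * f (exp u) / ∫ t in (0:ℝ)..exp u, f t) u := fun u => by
    rw [mul_comm]
    exact ((hasDerivAt_integral_zero hcont (exp_pos u)).comp u (hasDerivAt_exp u)).log
      (integral_zero_pos hcont hpos (exp_pos u)).ne'
  refine Antitone.concaveOn_univ_of_deriv (fun u => (hderiv u).differentiableAt) ?_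
  intro u v huv
  simp only [(hderiv u).deriv, (hderiv v).deriv]
  have hpos_exp : ∀ w, 0 < (∫ t in (0:ℝ)..exp w, f t) / (exp w * f (exp w)) := fun w =>
    div_pos (integral_zero_pos hcont hpos (exp_pos w)) (mul_pos (exp_pos w) (hpos _ (exp_pos w)))
  simpa only [inv_div] using inv_anti₀ (hpos_exp u)
    (monotoneOn_integral_zero_div_mul_self hcont hmono (exp_pos u) (exp_pos v)
      (exp_le_exp.2 huv))

end IntegralFromZero

lemma rpow_mul_rpow_le_of_concaveOn_log_exp {F : ℝ → ℝ} (hF : ∀ x, 0 < x → 0 < F x)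
    (hconc : ConcaveOn ℝ univ fun u => log (F (exp u))) {x y l : ℝ} (hx : 0 < x) (hy : 0 < y)
    (hl : l ∈ Icc (0:ℝ) 1) :
    F x ^ l * F y ^ (1 - l) ≤ F (x ^ l * y ^ (1 - l)) := by
  have key := hconc.2 (mem_univ (log x)) (mem_univ (log y)) hl.1 (sub_nonneg.2 hl.2)
    (add_sub_cancel l 1)
  simp only [smul_eq_mul, exp_log hx, exp_log hy] at key
  have hmean : exp (l * log x + (1 - l) * log y) = x ^ l * y ^ (1 - l) := by
    rw [exp_add, rpow_def_of_pos hx, rpow_def_of_pos hy, mul_comm l, mul_comm (1 - l)]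
  rw [hmean] at key
  calc F x ^ l * F y ^ (1 - l)
      = exp (l * log (F x) + (1 - l) * log (F y)) := by
        rw [exp_add, rpow_def_of_pos (hF x hx), rpow_def_of_pos (hF y hy),
          mul_comm l, mul_comm (1 - l)]
    _ ≤ exp (log (F (x ^ l * y ^ (1 - l)))) := exp_le_exp.2 key
    _ = F (x ^ l * y ^ (1 - l)) :=
        exp_log (hF _ (mul_pos (rpow_pos_of_pos hx l) (rpow_pos_of_pos hy (1 - l))))

section OneAddRpow

variable {q a : ℝ}

lemma one_add_rpow_pos {t : ℝ} (ht : 0 ≤ t) : 0 < 1 + t ^ q := by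
  linarith [rpow_nonneg ht q]

lemma continuousOn_one_add_rpow_rpow (hq : 0 ≤ q) :
    ContinuousOn (fun t : ℝ => (1 + t ^ q) ^ a) (Ici 0) :=
  (continuousOn_const.add (continuousOn_id.rpow_const fun _ _ => Or.inr hq)).rpow_const
    fun _ ht => Or.inl (one_add_rpow_pos ht).ne'

/-- After clearing denominators the inequality is `x₁^q (1 - τ^q) ≤ x₂^q (1 - τ^q)`. -/
lemma antitoneOn_one_add_rpow_mul_div (hq : 0 ≤ q) {τ : ℝ} (hτ : τ ∈ Icc (0:ℝ) 1) :
    AntitoneOn (fun x : ℝ => (1 + (x * τ) ^ q) / (1 + x ^ q)) (Ioi 0) := by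
  intro x₁ hx₁ x₂ hx₂ hle
  have hτq1 : τ ^ q ≤ 1 := rpow_le_one hτ.1 hτ.2 hq
  have hx₁₂ : x₁ ^ q ≤ x₂ ^ q := rpow_le_rpow hx₁.le hle hq
  rw [div_le_div_iff₀ (one_add_rpow_pos hx₂.le) (one_add_rpow_pos hx₁.le),
    mul_rpow hx₁.le hτ.1, mul_rpow hx₂.le hτ.1]
  nlinarith [mul_le_mul_of_nonneg_right hx₁₂ (sub_nonneg.2 hτq1)]

lemma monotoneOn_one_add_rpow_rpow_ratio (hq : 0 ≤ q) (ha : a ≤ 0) {τ : ℝ}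
    (hτ : τ ∈ Icc (0:ℝ) 1) :
    MonotoneOn (fun x : ℝ => (1 + (x * τ) ^ q) ^ a / (1 + x ^ q) ^ a) (Ioi 0) := by
  have hratio : ∀ x ∈ Ioi (0:ℝ),
      (1 + (x * τ) ^ q) ^ a / (1 + x ^ q) ^ a = ((1 + (x * τ) ^ q) / (1 + x ^ q)) ^ a :=
    fun x hx => (div_rpow (one_add_rpow_pos (mul_nonneg hx.le hτ.1)).le
      (one_add_rpow_pos hx.le).le a).symm
  intro x₁ hx₁ x₂ hx₂ hle
  simp only [hratio x₁ hx₁, hratio x₂ hx₂]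
  exact rpow_le_rpow_of_nonpos
    (div_pos (one_add_rpow_pos (mul_nonneg hx₂.le hτ.1)) (one_add_rpow_pos hx₂.le))
    (antitoneOn_one_add_rpow_mul_div hq hτ hx₁ hx₂ hle) ha

end OneAddRpow

theorem arcsinh_pq_geom_concave (p q : ℝ) (hp : 1 < p) (hq : 1 < q) :
    ∀ x ∈ Set.Ioi (0:ℝ), ∀ y ∈ Set.Ioi (0:ℝ), ∀ l ∈ Set.Icc (0:ℝ) 1,
      (∫ t in (0:ℝ)..(x ^ l * y ^ (1 - l)), (1 + t ^ q) ^ (-1/p))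
        ≥ (∫ t in (0:ℝ)..x, (1 + t ^ q) ^ (-1/p)) ^ l
            * (∫ t in (0:ℝ)..y, (1 + t ^ q) ^ (-1/p)) ^ (1 - l) := by
  intro x hx y hy l hl
  have hq0 : 0 ≤ q := by linarith
  have ha : -1 / p ≤ 0 := div_nonpos_of_nonpos_of_nonneg (by norm_num) (by linarith)
  have hcont := continuousOn_one_add_rpow_rpow (a := -1 / p) hq0
  have hpos : ∀ t : ℝ, 0 < t → 0 < (1 + t ^ q) ^ (-1 / p) := fun t ht =>
    rpow_pos_of_pos (one_add_rpow_pos ht.le) _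
  exact rpow_mul_rpow_le_of_concaveOn_log_exp (fun x hx => integral_zero_pos hcont hpos hx)
    (concaveOn_log_integral_zero_exp hcont hpos
      fun τ hτ => monotoneOn_one_add_rpow_rpow_ratio hq0 ha hτ) hx hy hl
end

section
/- For p > 1 and r, s ∈ (0,1), sin_p(√(rs)) ≥ √(sin_p(r) · sin_p(s)), where sin_p is the inverse of arcsin_p(x) = ∫_0^x (1-t^p)^(-1/p) dt. -/
/-!
Substituting `t ↦ x t` gives `arcsin_p x = ∫₀¹ x w(x t) dt` with `w(u) = (1 - u^p)^(-1/p)`.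
Since `√(XY) + √((1 - X)(1 - Y)) ≤ 1` on `[0,1]²` (applied to `X = x^p`, `Y = y^p`), the
integrand satisfies `w(√(xy)) ≤ √(w(x) w(y))`, and the Cauchy–Schwarz inequality for integrals
then yields `arcsin_p √(ab) ≤ √(arcsin_p a · arcsin_p b)`. Applying the increasing function
`sin_p` to this with `a = sin_p r`, `b = sin_p s` gives the theorem.
-/

open Real Set intervalIntegral MeasureTheory

theorem MeasureTheory.integral_sqrt_mul_sqrt_le {α : Type*} [MeasurableSpace α] {μ : Measure α}
    {f g : α → ℝ}
    (hf₀ : 0 ≤ᵐ[μ] f) (hg₀ : 0 ≤ᵐ[μ] g) (hf : Integrable f μ) (hg : Integrable g μ) :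
    ∫ a, √(f a) * √(g a) ∂μ ≤ √(∫ a, f a ∂μ) * √(∫ a, g a ∂μ) := by
  have hsqrt : ∀ {h : α → ℝ}, 0 ≤ᵐ[μ] h → Integrable h μ →
      MemLp (fun a ↦ √(h a)) (ENNReal.ofReal 2) μ ∧ ∫ a, √(h a) ^ (2 : ℝ) ∂μ = ∫ a, h a ∂μ := by
    intro h h₀ hh
    have hsq : (fun a ↦ √(h a) ^ (2 : ℝ)) =ᵐ[μ] h := by
      filter_upwards [h₀] with a ha
      rw [rpow_two, sq_sqrt ha]
    refine ⟨?_, integral_congr_ae hsq⟩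
    rw [ENNReal.ofReal_ofNat, memLp_two_iff_integrable_sq
      (continuous_sqrt.comp_aestronglyMeasurable hh.aestronglyMeasurable)]
    refine hh.congr ?_
    filter_upwards [h₀] with a ha
    rw [sq_sqrt ha]
  obtain ⟨hf₂, hf_int⟩ := hsqrt hf₀ hf
  obtain ⟨hg₂, hg_int⟩ := hsqrt hg₀ hg
  have := integral_mul_le_Lp_mul_Lq_of_nonneg Real.HolderConjugate.two_two
    (ae_of_all _ fun a ↦ sqrt_nonneg (f a))
    (ae_of_all _ fun a ↦ sqrt_nonneg (g a)) hf₂ hg₂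
  rwa [hf_int, hg_int, ← sqrt_eq_rpow, ← sqrt_eq_rpow] at this

theorem intervalIntegral.integral_sqrt_mul_sqrt_le {f g : ℝ → ℝ} {a b : ℝ} (hab : a ≤ b)
    (hf₀ : ∀ t ∈ Icc a b, 0 ≤ f t) (hg₀ : ∀ t ∈ Icc a b, 0 ≤ g t)
    (hf : IntervalIntegrable f volume a b) (hg : IntervalIntegrable g volume a b) :
    ∫ t in a..b, √(f t) * √(g t) ≤ √(∫ t in a..b, f t) * √(∫ t in a..b, g t) := by
  simp only [integral_of_le hab]
  have h_ae : ∀ {h : ℝ → ℝ}, (∀ t ∈ Icc a b, 0 ≤ h t) → 0 ≤ᵐ[volume.restrict (Ioc a b)] h :=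
    fun h₀ ↦ (ae_restrict_iff' measurableSet_Ioc).2
      (ae_of_all _ fun t ht ↦ h₀ t (Ioc_subset_Icc_self ht))
  exact MeasureTheory.integral_sqrt_mul_sqrt_le (h_ae hf₀) (h_ae hg₀) hf.1 hg.1

theorem Real.sqrt_mul_rpow {x y : ℝ} (hx : 0 ≤ x) (hy : 0 ≤ y) (q : ℝ) :
    √(x * y) ^ q = √(x ^ q * y ^ q) := by
  rw [sqrt_eq_rpow, sqrt_eq_rpow, ← mul_rpow hx hy, ← rpow_mul (mul_nonneg hx hy),
    ← rpow_mul (mul_nonneg hx hy), mul_comm q]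

theorem Real.sqrt_mul_add_sqrt_mul_le_one {x y : ℝ} (hx₀ : 0 ≤ x) (hx₁ : x ≤ 1) (hy₀ : 0 ≤ y)
    (hy₁ : y ≤ 1) :
    √(x * y) + √((1 - x) * (1 - y)) ≤ 1 := by
  rw [sqrt_mul hx₀, sqrt_mul (by linarith)]
  nlinarith [sq_sqrt hx₀, sq_sqrt hy₀, sq_sqrt (sub_nonneg.2 hx₁), sq_sqrt (sub_nonneg.2 hy₁),
    sq_nonneg (√x - √y), sq_nonneg (√(1 - x) - √(1 - y))]

theorem Real.sqrt_mul_mem_Ioo {x y : ℝ} (hx : x ∈ Ioo (0 : ℝ) 1) (hy : y ∈ Ioo (0 : ℝ) 1) :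
    √(x * y) ∈ Ioo (0 : ℝ) 1 :=
  ⟨sqrt_pos.2 (mul_pos hx.1 hy.1), (sqrt_lt' one_pos).2 (by nlinarith [hx.1, hy.1, hx.2, hy.2])⟩

noncomputable def arcsinPIntegrand (p t : ℝ) : ℝ := (1 - t ^ p) ^ (-1 / p)

noncomputable def arcsinP (p x : ℝ) : ℝ := ∫ t in (0 : ℝ)..x, arcsinPIntegrand p t

section
variable {p : ℝ}

theorem one_le_arcsinPIntegrand (hp : 0 < p) {t : ℝ} (ht : t ∈ Ico (0 : ℝ) 1) :
    1 ≤ arcsinPIntegrand p t :=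
  one_le_rpow_of_pos_of_le_one_of_nonpos
    (sub_pos.2 (rpow_lt_one ht.1 ht.2 hp)) (sub_le_self _ (rpow_nonneg ht.1 p))
    (div_nonpos_of_nonpos_of_nonneg (by norm_num) hp.le)

theorem continuousOn_arcsinPIntegrand (hp : 0 < p) :
    ContinuousOn (arcsinPIntegrand p) (Ico 0 1) :=
  (continuousOn_const.sub (continuousOn_id.rpow_const fun _ _ ↦ Or.inr hp.le)).rpow_const
    fun _ ht ↦ Or.inl (sub_pos.2 (rpow_lt_one ht.1 ht.2 hp)).ne'

theorem arcsinPIntegrand_sqrt_mul_le (hp : 0 < p) {x y : ℝ} (hx : x ∈ Ico (0 : ℝ) 1)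
    (hy : y ∈ Ico (0 : ℝ) 1) :
    arcsinPIntegrand p √(x * y) ≤ √(arcsinPIntegrand p x * arcsinPIntegrand p y) := by
  have hX := rpow_lt_one hx.1 hx.2 hp
  have hY := rpow_lt_one hy.1 hy.2 hp
  have hX₀ := rpow_nonneg hx.1 p
  have hY₀ := rpow_nonneg hy.1 p
  unfold arcsinPIntegrand
  rw [sqrt_mul_rpow hx.1 hy.1, ← sqrt_mul_rpow (sub_pos.2 hX).le (sub_pos.2 hY).le]
  refine rpow_le_rpow_of_nonpos (sqrt_pos.2 (mul_pos (sub_pos.2 hX) (sub_pos.2 hY))) ?_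
    (div_nonpos_of_nonpos_of_nonneg (by norm_num) hp.le)
  linarith [sqrt_mul_add_sqrt_mul_le_one hX₀ hX.le hY₀ hY.le]

theorem arcsinP_zero : arcsinP p 0 = 0 := integral_same

theorem intervalIntegrable_arcsinPIntegrand (hp : 0 < p) {u v : ℝ} (hu : 0 ≤ u) (huv : u ≤ v)
    (hv : v < 1) : IntervalIntegrable (arcsinPIntegrand p) volume u v :=
  ((continuousOn_arcsinPIntegrand hp).mono (Icc_subset_Ico hu hv)).intervalIntegrable_of_Icc huv

theorem sub_le_arcsinP_sub (hp : 0 < p) {u v : ℝ} (hu : 0 ≤ u) (huv : u ≤ v) (hv : v < 1) :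
    v - u ≤ arcsinP p v - arcsinP p u := by
  rw [arcsinP, arcsinP, integral_interval_sub_left
    (intervalIntegrable_arcsinPIntegrand hp le_rfl (hu.trans huv) hv)
    (intervalIntegrable_arcsinPIntegrand hp le_rfl hu (huv.trans_lt hv))]
  simpa using integral_mono_on huv intervalIntegrable_const
    (intervalIntegrable_arcsinPIntegrand hp hu huv hv)
    fun t ht ↦ one_le_arcsinPIntegrand hp ⟨hu.trans ht.1, ht.2.trans_lt hv⟩

theorem le_arcsinP (hp : 0 < p) {x : ℝ} (hx₀ : 0 ≤ x) (hx₁ : x < 1) : x ≤ arcsinP p x := by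
  simpa [arcsinP_zero] using sub_le_arcsinP_sub hp le_rfl hx₀ hx₁

theorem strictMonoOn_arcsinP (hp : 0 < p) : StrictMonoOn (arcsinP p) (Ico 0 1) :=
  fun u hu v hv huv ↦ by linarith [sub_le_arcsinP_sub hp hu.1 huv.le hv.2]

theorem continuousOn_arcsinP (hp : 0 < p) {x : ℝ} (hx₀ : 0 ≤ x) (hx₁ : x < 1) :
    ContinuousOn (arcsinP p) (Icc 0 x) := by
  rw [← uIcc_of_le hx₀]
  exact continuousOn_primitive_interval'
    (intervalIntegrable_arcsinPIntegrand hp le_rfl hx₀ hx₁) left_mem_uIcc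

theorem Ioo_subset_image_arcsinP (hp : 0 < p) : Ioo 0 1 ⊆ arcsinP p '' Ioo 0 1 := by
  intro u hu
  obtain ⟨x, hx, rfl⟩ := intermediate_value_Icc hu.1.le (continuousOn_arcsinP hp hu.1.le hu.2)
    ⟨arcsinP_zero.trans_le hu.1.le, le_arcsinP hp hu.1.le hu.2⟩
  refine ⟨x, ⟨hx.1.lt_of_ne ?_, hx.2.trans_lt hu.2⟩, rfl⟩
  rintro rfl
  exact hu.1.ne' arcsinP_zero

theorem arcsinP_eq_integral_mul (x : ℝ) :
    arcsinP p x = ∫ t in (0 : ℝ)..1, x * arcsinPIntegrand p (x * t) := by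
  rw [intervalIntegral.integral_const_mul, mul_integral_comp_mul_left, mul_zero, mul_one, arcsinP]

theorem arcsinP_sqrt_mul_le (hp : 0 < p) {a b : ℝ} (ha : a ∈ Ico (0 : ℝ) 1)
    (hb : b ∈ Ico (0 : ℝ) 1) :
    arcsinP p √(a * b) ≤ √(arcsinP p a * arcsinP p b) := by
  set w := arcsinPIntegrand p
  have hmem : ∀ x ∈ Ico (0 : ℝ) 1, ∀ t ∈ Icc (0 : ℝ) 1, x * t ∈ Ico (0 : ℝ) 1 :=
    fun x hx t ht ↦ ⟨mul_nonneg hx.1 ht.1, (mul_le_of_le_one_right hx.1 ht.2).trans_lt hx.2⟩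
  have hcont : ∀ x ∈ Ico (0 : ℝ) 1, ContinuousOn (fun t ↦ x * w (x * t)) (Icc 0 1) :=
    fun x hx ↦ continuousOn_const.mul ((continuousOn_arcsinPIntegrand hp).comp
      (continuousOn_const.mul continuousOn_id) (hmem x hx))
  have hnonneg : ∀ x ∈ Ico (0 : ℝ) 1, ∀ t ∈ Icc (0 : ℝ) 1, 0 ≤ x * w (x * t) :=
    fun x hx t ht ↦
      mul_nonneg hx.1 (zero_le_one.trans (one_le_arcsinPIntegrand hp (hmem x hx t ht)))
  have hab : √(a * b) ∈ Ico (0 : ℝ) 1 :=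
    ⟨sqrt_nonneg _, (sqrt_lt' one_pos).2 (by nlinarith [ha.1, hb.1, ha.2, hb.2])⟩
  have hpointwise : ∀ t ∈ Icc (0 : ℝ) 1,
      √(a * b) * w (√(a * b) * t) ≤ √(a * w (a * t)) * √(b * w (b * t)) := by
    intro t ht
    have harg : √(a * b) * t = √(a * t * (b * t)) := by
      rw [show a * t * (b * t) = a * b * (t * t) by ring, sqrt_mul (mul_nonneg ha.1 hb.1),
        sqrt_mul_self ht.1]
    rw [harg, ← sqrt_mul (hnonneg a ha t ht),
      show a * w (a * t) * (b * w (b * t)) = a * b * (w (a * t) * w (b * t)) by ring,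
      sqrt_mul (mul_nonneg ha.1 hb.1)]
    exact mul_le_mul_of_nonneg_left
      (arcsinPIntegrand_sqrt_mul_le hp (hmem a ha t ht) (hmem b hb t ht)) (sqrt_nonneg _)
  calc arcsinP p √(a * b) = ∫ t in (0 : ℝ)..1, √(a * b) * w (√(a * b) * t) :=
        arcsinP_eq_integral_mul _
    _ ≤ ∫ t in (0 : ℝ)..1, √(a * w (a * t)) * √(b * w (b * t)) :=
        integral_mono_on zero_le_one ((hcont _ hab).intervalIntegrable_of_Icc zero_le_one)
          (((continuous_sqrt.comp_continuousOn (hcont a ha)).mul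
            (continuous_sqrt.comp_continuousOn (hcont b hb))).intervalIntegrable_of_Icc
              zero_le_one) hpointwise
    _ ≤ √(∫ t in (0 : ℝ)..1, a * w (a * t)) * √(∫ t in (0 : ℝ)..1, b * w (b * t)) :=
        intervalIntegral.integral_sqrt_mul_sqrt_le zero_le_one (hnonneg a ha) (hnonneg b hb)
          ((hcont a ha).intervalIntegrable_of_Icc zero_le_one)
          ((hcont b hb).intervalIntegrable_of_Icc zero_le_one)
    _ = √(arcsinP p a * arcsinP p b) := by
        rw [← arcsinP_eq_integral_mul, ← arcsinP_eq_integral_mul,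
          sqrt_mul ((le_arcsinP hp ha.1 ha.2).trans' ha.1)]

end

theorem sin_p_sqrt_ineq (p : ℝ) (hp : 1 < p) (S : ℝ → ℝ)
    (hS : ∀ x ∈ Set.Icc (0:ℝ) 1,
      S (∫ t in (0:ℝ)..x, (1 - t ^ p) ^ (-1/p)) = x) :
    ∀ r ∈ Set.Ioo (0:ℝ) 1, ∀ s ∈ Set.Ioo (0:ℝ) 1,
      S (Real.sqrt (r * s)) ≥ Real.sqrt (S r * S s) := by
  have hp₀ : 0 < p := one_pos.trans hp
  have hS_arcsinP : ∀ x ∈ Ioo (0 : ℝ) 1, S (arcsinP p x) = x :=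
    fun x hx ↦ hS x (Ioo_subset_Icc_self hx)
  intro r hr s hs
  obtain ⟨a, ha, rfl⟩ := Ioo_subset_image_arcsinP hp₀ hr
  obtain ⟨b, hb, rfl⟩ := Ioo_subset_image_arcsinP hp₀ hs
  obtain ⟨c, hc, hc_eq⟩ := Ioo_subset_image_arcsinP hp₀ (sqrt_mul_mem_Ioo hr hs)
  rw [← hc_eq, hS_arcsinP a ha, hS_arcsinP b hb, hS_arcsinP c hc, ge_iff_le,
    ← (strictMonoOn_arcsinP hp₀).le_iff_le (Ioo_subset_Ico_self (sqrt_mul_mem_Ioo ha hb))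
      (Ioo_subset_Ico_self hc), hc_eq]
  exact arcsinP_sqrt_mul_le hp₀ (Ioo_subset_Ico_self ha) (Ioo_subset_Ico_self hb)
end

section
/- For p > 1 and r, s ∈ (0,1), sinh_p(√(rs)) ≤ √(sinh_p(r) · sinh_p(s)), where sinh_p is the inverse of arcsinh_p(x) = ∫_0^x (1+t^p)^(-1/p) dt. -/
/-!
Put `φ = arcsinh_p'`. The inequality is `arcsinh_p √(xy) ≥ √(arcsinh_p x · arcsinh_p y)`
read through the increasing inverse `sinh_p`, and it follows from concavity of
`u ↦ log arcsinh_p (exp u)`. That concavity says `x φ(x) / arcsinh_p x` is decreasing. The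
derivative of this quotient has the sign of `(x φ)' · arcsinh_p x - x φ²`, and this is nonpositive
because `arcsinh_p x ≤ x` and `(x φ)' = (1 + x^p)^(-1/p-1) ≤ (1 + x^p)^(-2/p) = φ²` when `p ≥ 1`.
-/

open Real Set intervalIntegral MeasureTheory

section GeometricConcavity

variable {F F' : ℝ → ℝ}

theorem concaveOn_log_comp_exp_of_antitoneOn (hF : ∀ x, 0 < x → HasDerivAt F (F' x) x)
    (hF_pos : ∀ x, 0 < x → 0 < F x) (h_anti : AntitoneOn (fun x ↦ x * F' x / F x) (Ioi 0)) :
    ConcaveOn ℝ univ (fun u ↦ log (F (exp u))) := by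
  have hderiv (u : ℝ) :
      HasDerivAt (fun u ↦ log (F (exp u))) (exp u * F' (exp u) / F (exp u)) u := by
    have h := ((hF _ (exp_pos u)).comp u (hasDerivAt_exp u)).log (hF_pos _ (exp_pos u)).ne'
    simp only [Function.comp_def] at h
    convert h using 1
    ring
  refine Antitone.concaveOn_univ_of_deriv (fun u ↦ (hderiv u).differentiableAt) fun u v huv ↦ ?_
  rw [(hderiv u).deriv, (hderiv v).deriv]
  exact h_anti (exp_pos u) (exp_pos v) (exp_le_exp.2 huv)

theorem sqrt_mul_le_of_concaveOn_log_comp_exp (hF_pos : ∀ x, 0 < x → 0 < F x)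
    (hF : ConcaveOn ℝ univ (fun u ↦ log (F (exp u)))) {x y : ℝ} (hx : 0 < x) (hy : 0 < y) :
    √(F x * F y) ≤ F √(x * y) := by
  have hmid : exp ((1 / 2 : ℝ) • log x + (1 / 2 : ℝ) • log y) = √(x * y) := by
    rw [smul_eq_mul, smul_eq_mul, ← mul_add, ← log_mul hx.ne' hy.ne', sqrt_eq_rpow,
      rpow_def_of_pos (by positivity), mul_comm]
  have h := hF.2 (mem_univ (log x)) (mem_univ (log y)) (by norm_num : (0:ℝ) ≤ 1 / 2)
    (by norm_num : (0:ℝ) ≤ 1 / 2) (by norm_num)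
  simp only at h
  rw [hmid, exp_log hx, exp_log hy, smul_eq_mul, smul_eq_mul] at h
  have hFx := hF_pos x hx
  have hFy := hF_pos y hy
  rw [← log_le_log_iff (by positivity) (hF_pos _ (by positivity)),
    log_sqrt (by positivity), log_mul hFx.ne' hFy.ne']
  linarith

end GeometricConcavity

noncomputable def arcsinhPDeriv (p t : ℝ) : ℝ := (1 + t ^ p) ^ (-1 / p)

noncomputable def arcsinhP (p x : ℝ) : ℝ := ∫ t in (0:ℝ)..x, arcsinhPDeriv p t

section ArcsinhP

variable {p t x : ℝ}

theorem arcsinhPDeriv_pos (ht : 0 ≤ t) : 0 < arcsinhPDeriv p t :=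
  rpow_pos_of_pos (by positivity) _

theorem arcsinhPDeriv_le_one (hp : 0 < p) (ht : 0 ≤ t) : arcsinhPDeriv p t ≤ 1 :=
  rpow_le_one_of_one_le_of_nonpos (le_add_of_nonneg_right (rpow_nonneg ht p))
    (div_nonpos_of_nonpos_of_nonneg (by norm_num) hp.le)

theorem antitoneOn_arcsinhPDeriv (hp : 0 < p) : AntitoneOn (arcsinhPDeriv p) (Ici 0) :=
  fun a (ha : 0 ≤ a) _ _ hab ↦ rpow_le_rpow_of_nonpos (by positivity)
    (add_le_add_right (rpow_le_rpow ha hab hp.le) 1)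
    (div_nonpos_of_nonpos_of_nonneg (by norm_num) hp.le)

theorem continuousAt_arcsinhPDeriv (hp : 0 < p) (ht : 0 ≤ t) : ContinuousAt (arcsinhPDeriv p) t :=
  (continuousAt_const.add (continuousAt_rpow_const t p (Or.inr hp.le))).rpow_const
    (Or.inl (add_pos_of_pos_of_nonneg one_pos (rpow_nonneg ht p)).ne')

theorem intervalIntegrable_arcsinhPDeriv (hp : 0 < p) {a b : ℝ} (ha : 0 ≤ a) (hb : 0 ≤ b) :
    IntervalIntegrable (arcsinhPDeriv p) volume a b :=
  ContinuousOn.intervalIntegrable fun _ ht ↦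
    (continuousAt_arcsinhPDeriv hp ((le_inf ha hb).trans ht.1)).continuousWithinAt

theorem arcsinhP_strictMonoOn (hp : 0 < p) : StrictMonoOn (arcsinhP p) (Ici 0) := by
  intro a ha b hb hab
  have hdiff : arcsinhP p b - arcsinhP p a = ∫ t in a..b, arcsinhPDeriv p t :=
    integral_interval_sub_left (intervalIntegrable_arcsinhPDeriv hp le_rfl hb)
      (intervalIntegrable_arcsinhPDeriv hp le_rfl ha)
  have hpos : 0 < ∫ t in a..b, arcsinhPDeriv p t :=
    intervalIntegral_pos_of_pos_on (intervalIntegrable_arcsinhPDeriv hp ha hb)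
      (fun t ht ↦ arcsinhPDeriv_pos (ha.trans ht.1.le)) hab
  linarith

theorem arcsinhP_pos (hp : 0 < p) (hx : 0 < x) : 0 < arcsinhP p x := by
  simpa [arcsinhP] using arcsinhP_strictMonoOn hp self_mem_Ici hx.le hx

theorem arcsinhP_le_self (hp : 0 < p) (hx : 0 ≤ x) : arcsinhP p x ≤ x := by
  calc arcsinhP p x ≤ ∫ _ in (0:ℝ)..x, (1 : ℝ) :=
        integral_mono_on hx (intervalIntegrable_arcsinhPDeriv hp le_rfl hx)
          intervalIntegrable_const fun _ ht ↦ arcsinhPDeriv_le_one hp ht.1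
    _ = x := by simp

theorem mul_arcsinhPDeriv_le_arcsinhP (hp : 0 < p) (hx : 0 ≤ x) :
    x * arcsinhPDeriv p x ≤ arcsinhP p x := by
  calc x * arcsinhPDeriv p x = ∫ _ in (0:ℝ)..x, arcsinhPDeriv p x := by simp
    _ ≤ arcsinhP p x :=
        integral_mono_on hx intervalIntegrable_const (intervalIntegrable_arcsinhPDeriv hp le_rfl hx)
          fun t ht ↦ antitoneOn_arcsinhPDeriv hp ht.1 hx ht.2

theorem hasDerivAt_arcsinhP (hp : 0 < p) (hx : 0 < x) :
    HasDerivAt (arcsinhP p) (arcsinhPDeriv p x) x :=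
  integral_hasDerivAt_right (intervalIntegrable_arcsinhPDeriv hp le_rfl hx.le)
    (ContinuousOn.stronglyMeasurableAtFilter isOpen_Ioi
      (fun _ ht ↦ (continuousAt_arcsinhPDeriv hp (le_of_lt ht)).continuousWithinAt) x hx)
    (continuousAt_arcsinhPDeriv hp hx.le)

theorem continuousOn_arcsinhP (hp : 0 < p) (hx : 0 ≤ x) : ContinuousOn (arcsinhP p) (Icc 0 x) := by
  rw [← uIcc_of_le hx]
  refine continuousOn_primitive_interval (ContinuousOn.integrableOn_compact isCompact_uIcc ?_)
  intro t ht
  rw [uIcc_of_le hx] at ht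
  exact (continuousAt_arcsinhPDeriv hp ht.1).continuousWithinAt

/-- The witness is `r (1 - r ^ p) ^ (-1 / p)`, at which `1 + x ^ p = (1 - r ^ p)⁻¹`. -/
theorem exists_mul_arcsinhPDeriv_eq (hp : 0 < p) {r : ℝ} (hr₀ : 0 < r) (hr₁ : r < 1) :
    ∃ x, 0 < x ∧ x * arcsinhPDeriv p x = r := by
  set c := 1 - r ^ p
  have hc : 0 < c := sub_pos.2 (rpow_lt_one hr₀.le hr₁ hp)
  refine ⟨r * c ^ (-1 / p), by positivity, ?_⟩
  have hbase : 1 + (r * c ^ (-1 / p)) ^ p = c ^ (-1 : ℝ) := by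
    rw [mul_rpow hr₀.le (by positivity), ← rpow_mul hc.le, div_mul_cancel₀ _ hp.ne', rpow_neg_one]
    field_simp
    ring
  rw [arcsinhPDeriv, hbase, ← rpow_mul hc.le, mul_assoc, ← rpow_add hc]
  field_simp
  simp

theorem exists_arcsinhP_eq (hp : 0 < p) {r : ℝ} (hr₀ : 0 < r) (hr₁ : r < 1) :
    ∃ x, 0 < x ∧ arcsinhP p x = r := by
  obtain ⟨X, hX, hXr⟩ := exists_mul_arcsinhPDeriv_eq hp hr₀ hr₁
  have hr : r ∈ Ioc (arcsinhP p 0) (arcsinhP p X) := by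
    refine ⟨by simpa [arcsinhP] using hr₀, hXr ▸ mul_arcsinhPDeriv_le_arcsinhP hp hX.le⟩
  obtain ⟨x, hx, hxr⟩ := intermediate_value_Ioc hX.le (continuousOn_arcsinhP hp hX.le) hr
  exact ⟨x, hx.1, hxr⟩

theorem hasDerivAt_mul_arcsinhPDeriv (hp : 0 < p) (hx : 0 < x) :
    HasDerivAt (fun x ↦ x * arcsinhPDeriv p x) ((1 + x ^ p) ^ (-1 / p - 1)) x := by
  have hbase : 0 < 1 + x ^ p := by positivity
  have h : HasDerivAt (fun x ↦ x * arcsinhPDeriv p x) (1 * (1 + x ^ p) ^ (-1 / p) +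
      x * (p * x ^ (p - 1) * (-1 / p) * (1 + x ^ p) ^ (-1 / p - 1))) x :=
    (hasDerivAt_id' x).mul
      (((hasDerivAt_rpow_const (Or.inl hx.ne')).const_add 1).rpow_const (Or.inl hbase.ne'))
  convert h using 1
  have hxp : x * x ^ (p - 1) = x ^ p := by
    rw [← rpow_one_add' hx.le (by linarith), add_sub_cancel]
  have hsplit : (1 + x ^ p) ^ (-1 / p) = (1 + x ^ p) ^ (-1 / p - 1) * (1 + x ^ p) := by
    rw [← rpow_add_one hbase.ne', sub_add_cancel]
  rw [hsplit, show x * (p * x ^ (p - 1) * (-1 / p) * (1 + x ^ p) ^ (-1 / p - 1)) =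
    -(x * x ^ (p - 1)) * (1 + x ^ p) ^ (-1 / p - 1) by field_simp, hxp]
  ring

theorem antitoneOn_mul_arcsinhPDeriv_div_arcsinhP (hp : 1 ≤ p) :
    AntitoneOn (fun x ↦ x * arcsinhPDeriv p x / arcsinhP p x) (Ioi 0) := by
  have hp₀ : 0 < p := by linarith
  have hderiv {x : ℝ} (hx : 0 < x) := (hasDerivAt_mul_arcsinhPDeriv hp₀ hx).div
    (hasDerivAt_arcsinhP hp₀ hx) (arcsinhP_pos hp₀ hx).ne'
  refine antitoneOn_of_hasDerivWithinAt_nonpos (convex_Ioi 0)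
    (fun x hx ↦ (hderiv hx).continuousAt.continuousWithinAt)
    (fun x hx ↦ (hderiv (interior_subset hx)).hasDerivWithinAt) fun x hx ↦ ?_
  rw [interior_Ioi] at hx
  have hx : 0 < x := hx
  refine div_nonpos_of_nonpos_of_nonneg (sub_nonpos.2 ?_) (sq_nonneg _)
  have hsq : (1 + x ^ p) ^ (-1 / p - 1) ≤ arcsinhPDeriv p x * arcsinhPDeriv p x := by
    rw [arcsinhPDeriv, ← rpow_add (by positivity)]
    refine rpow_le_rpow_of_exponent_le (le_add_of_nonneg_right (by positivity)) ?_
    have : 1 / p ≤ 1 := (div_le_one hp₀).2 hp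
    rw [neg_div]
    linarith
  calc (1 + x ^ p) ^ (-1 / p - 1) * arcsinhP p x ≤ (1 + x ^ p) ^ (-1 / p - 1) * x :=
        mul_le_mul_of_nonneg_left (arcsinhP_le_self hp₀ hx.le) (by positivity)
    _ ≤ arcsinhPDeriv p x * arcsinhPDeriv p x * x := mul_le_mul_of_nonneg_right hsq hx.le
    _ = x * arcsinhPDeriv p x * arcsinhPDeriv p x := by ring

theorem sqrt_mul_arcsinhP_le_arcsinhP_sqrt (hp : 1 ≤ p) {y : ℝ} (hx : 0 < x) (hy : 0 < y) :
    √(arcsinhP p x * arcsinhP p y) ≤ arcsinhP p √(x * y) :=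
  have hp₀ : 0 < p := by linarith
  sqrt_mul_le_of_concaveOn_log_comp_exp (fun _ ↦ arcsinhP_pos hp₀)
    (concaveOn_log_comp_exp_of_antitoneOn (fun _ ↦ hasDerivAt_arcsinhP hp₀)
      (fun _ ↦ arcsinhP_pos hp₀) (antitoneOn_mul_arcsinhPDeriv_div_arcsinhP hp)) hx hy

end ArcsinhP

theorem sinh_p_sqrt_ineq (p : ℝ) (hp : 1 < p) (S : ℝ → ℝ)
    (hS : ∀ x ∈ Set.Ici (0:ℝ),
      S (∫ t in (0:ℝ)..x, (1 + t ^ p) ^ (-1/p)) = x) :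
    ∀ r ∈ Set.Ioo (0:ℝ) 1, ∀ s ∈ Set.Ioo (0:ℝ) 1,
      S (Real.sqrt (r * s)) ≤ Real.sqrt (S r * S s) := by
  intro r ⟨hr₀, hr₁⟩ s ⟨hs₀, hs₁⟩
  have hp₀ : 0 < p := by linarith
  have hS' {x : ℝ} (hx : 0 < x) : S (arcsinhP p x) = x := hS x hx.le
  have hrs : √(r * s) < 1 := sqrt_one ▸
    sqrt_lt_sqrt (by positivity) (mul_lt_one_of_nonneg_of_lt_one_left hr₀.le hr₁ hs₁.le)
  obtain ⟨x, hx, rfl⟩ := exists_arcsinhP_eq hp₀ hr₀ hr₁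
  obtain ⟨y, hy, rfl⟩ := exists_arcsinhP_eq hp₀ hs₀ hs₁
  obtain ⟨z, hz, hzxy⟩ := exists_arcsinhP_eq hp₀ (by positivity) hrs
  rw [hS' hx, hS' hy, ← hzxy, hS' hz]
  refine (arcsinhP_strictMonoOn hp₀).le_iff_le hz.le (sqrt_nonneg _) |>.1 ?_
  exact hzxy ▸ sqrt_mul_arcsinhP_le_arcsinhP_sqrt hp.le hx hy
end
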